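/- Let X be a Hilbert space, let A be a densely defined skew-adjoint operator on X with respect to the inner product ⟨·,·⟩, and let H be a bounded, self-adjoint, strictly positive operator on X. Define X_H to be X equipped with the inner product ⟨x,z⟩_H := ⟨Hx,z⟩, and define the operator Ã with domain H⁻¹(dom A) by Ãx := A(Hx). Then Ã is skew-adjoint on X_H. -/

import Mathlib

/-! A coercive bounded operator `H` is bounded below, so it has closed range, and its range has
trivial orthogonal complement (`⟪H z, z⟫ = 0` forces `z = 0`); hence `H` is onto (Lax–Milgram).
Since `H` is self-adjoint, `⟪H (A (H x)), z⟫ = ⟪A (H x), H z⟫`, and as `H x` runs over all of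
`dom A`, the adjoint condition for `Ã` at `z` in `X_H` is exactly the adjoint condition for `A`
at `H z` in `X`, which skew-adjointness of `A` resolves. -/

open RCLike

section Coercive

variable {𝕜 E : Type*} [RCLike 𝕜] [NormedAddCommGroup E] [InnerProductSpace 𝕜 E]

theorem ContinuousLinearMap.mul_norm_le_norm_apply_of_coercive (T : E →L[𝕜] E) {m : ℝ}
    (hT : ∀ x, m * ‖x‖ ^ 2 ≤ re (inner 𝕜 (T x) x)) (x : E) : m * ‖x‖ ≤ ‖T x‖ := by
  rcases (norm_nonneg x).eq_or_lt with hx | hx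
  · simp [← hx]
  have hmul : m * ‖x‖ * ‖x‖ ≤ ‖T x‖ * ‖x‖ := by
    calc m * ‖x‖ * ‖x‖ = m * ‖x‖ ^ 2 := by ring
      _ ≤ re (inner 𝕜 (T x) x) := hT x
      _ ≤ ‖T x‖ * ‖x‖ := re_inner_le_norm _ _
  exact le_of_mul_le_mul_right hmul hx

theorem ContinuousLinearMap.isClosed_range_of_coercive [CompleteSpace E] (T : E →L[𝕜] E)
    {m : ℝ} (hm : 0 < m) (hT : ∀ x, m * ‖x‖ ^ 2 ≤ re (inner 𝕜 (T x) x)) :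
    IsClosed (Set.range T) := by
  have hanti : AntilipschitzWith ⟨m⁻¹, (inv_pos.2 hm).le⟩ T :=
    T.antilipschitz_of_bound fun x => by
      show ‖x‖ ≤ m⁻¹ * ‖T x‖
      rw [inv_mul_eq_div, le_div_iff₀' hm]
      exact T.mul_norm_le_norm_apply_of_coercive hT x
  exact hanti.isClosed_range T.uniformContinuous

theorem ContinuousLinearMap.surjective_of_coercive [CompleteSpace E] (T : E →L[𝕜] E)
    {m : ℝ} (hm : 0 < m) (hT : ∀ x, m * ‖x‖ ^ 2 ≤ re (inner 𝕜 (T x) x)) :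
    Function.Surjective T := by
  have hclosed : IsClosed (LinearMap.range (T : E →ₗ[𝕜] E) : Set E) := by
    rw [LinearMap.coe_range]; exact T.isClosed_range_of_coercive hm hT
  have : CompleteSpace (LinearMap.range (T : E →ₗ[𝕜] E)) := hclosed.completeSpace_coe
  suffices h : (LinearMap.range (T : E →ₗ[𝕜] E))ᗮ = ⊥ by
    rw [Submodule.orthogonal_eq_bot_iff] at h
    exact LinearMap.range_eq_top.mp h
  refine (Submodule.eq_bot_iff _).mpr fun z hz => ?_
  have hzero : inner 𝕜 (T z) z = 0 := hz (T z) ⟨z, rfl⟩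
  have hcoer := hT z
  rw [hzero, map_zero] at hcoer
  have hsq : ‖z‖ ^ 2 ≤ 0 := nonpos_of_mul_nonpos_right hcoer hm
  simpa using hsq

end Coercive

theorem stmt1_general {X : Type*} [NormedAddCommGroup X] [InnerProductSpace ℂ X] [CompleteSpace X]
    (H : X →L[ℂ] X) (hH : IsSelfAdjoint H) (m : ℝ) (hm : 0 < m)
    (hlow : ∀ x : X, m * ‖x‖ ^ 2 ≤ (@inner ℂ X _ (H x) x).re)
    (D : Submodule ℂ X)
    (A : D →ₗ[ℂ] X)
    (hskew : ∀ z w : X,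
      (∀ x, ∀ hx : x ∈ D, @inner ℂ X _ (A ⟨x, hx⟩) z = @inner ℂ X _ x w) ↔
      ∃ hz : z ∈ D, w = -A ⟨z, hz⟩) :
    ∀ z w : X,
      (∀ x, ∀ hx : H x ∈ D, @inner ℂ X _ (H (A ⟨H x, hx⟩)) z = @inner ℂ X _ (H x) w) ↔
      ∃ hz : H z ∈ D, w = -A ⟨H z, hz⟩ := by
  have hsurj : Function.Surjective H := H.surjective_of_coercive hm hlow
  intro z w
  rw [← hskew (H z) w]
  refine Iff.trans ?_ hsurj.forall.symm
  have hsymm : ∀ x y, inner ℂ (H x) y = inner ℂ x (H y) := hH.isSymmetric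
  simp only [hsymm _ z]

/-- Let `A` be a densely defined skew-adjoint operator on a Hilbert space `X`
(skew-adjointness is expressed by the characterization of the adjoint:
`z ∈ dom(A*)` with `A* z = w` iff `z ∈ dom A` and `w = -A z`), and let `H` be a bounded,
self-adjoint, strictly positive operator on `X`.  Then the operator `Ã x := A (H x)` with
domain `{x : H x ∈ dom A}` is skew-adjoint on `X_H`, the space `X` with inner product
`⟨x,z⟩_H := ⟨Hx,z⟩`; i.e. the adjoint of `Ã` with respect to `⟨·,·⟩_H` is `-Ã`. -/
theorem stmt1 {X : Type*} [NormedAddCommGroup X] [InnerProductSpace ℂ X] [CompleteSpace X]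
    (H : X →L[ℂ] X) (hH : IsSelfAdjoint H) (m : ℝ) (hm : 0 < m)
    (hlow : ∀ x : X, m * ‖x‖ ^ 2 ≤ (@inner ℂ X _ (H x) x).re)
    (D : Submodule ℂ X) (hD : Dense (D : Set X))
    (A : D →ₗ[ℂ] X)
    (hskew : ∀ z w : X,
      (∀ x, ∀ hx : x ∈ D, @inner ℂ X _ (A ⟨x, hx⟩) z = @inner ℂ X _ x w) ↔
      ∃ hz : z ∈ D, w = -A ⟨z, hz⟩) :
    ∀ z w : X,
      (∀ x, ∀ hx : H x ∈ D, @inner ℂ X _ (H (A ⟨H x, hx⟩)) z = @inner ℂ X _ (H x) w) ↔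
      ∃ hz : H z ∈ D, w = -A ⟨H z, hz⟩ :=
  stmt1_general H hH m hm hlow D A hskew
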